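/- Let n, l, m be positive integers and let X = Σ_{k=0}^{n−1} Ω_n^k ⊗ x_k ∈ ℝ^{(n·l)×(n·m)} be block-circulant of order n with blocks x_k ∈ ℝ^{l×m}. Then X is centrosymmetric, i.e. J_{n·l} · X · J_{n·m} = X, if and only if its blocks satisfy x_{(n−k) mod n} = J_l · x_k · J_m for all k = 0, …, n−1; in particular this requires x_0 = J_l·x_0·J_m and, when n is even, x_{n/2} = J_l·x_{n/2}·J_m. -/

import Mathlib

open Matrix Kronecker
open Fin.NatCast

/-- The cyclic shift permutation matrix `Ω_n` with `(Ω_n)_{i,j} = 1` iff `j ≡ i+1 (mod n)`. -/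
def cyclicShift (n : ℕ) : Matrix (Fin n) (Fin n) ℝ :=
  Matrix.of fun i j => if (j : ℕ) = ((i : ℕ) + 1) % n then 1 else 0

/-- The exchange matrix `J_n` with ones on the anti-diagonal and zeros elsewhere. -/
def exchMatrix (n : ℕ) : Matrix (Fin n) (Fin n) ℝ :=
  Matrix.of fun i j => if (i : ℕ) + (j : ℕ) = n - 1 then 1 else 0

/-!
Conjugation by `J_n ⊗ J_l` and `J_n ⊗ J_m` reverses the block indices and the indices inside
each block. Since `rev j - rev i = i - j` in `Fin n`, it sends the block-circulant matrix with
blocks `x k` to the block-circulant matrix with blocks `J_l · x (-k) · J_m`, and a block-circulant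
matrix determines its blocks (they form its first block row). The special cases hold because `0`
and, for even `n`, `n / 2` are their own negatives in `Fin n`.
-/

theorem Fin.rev_sub_rev {n : ℕ} (i j : Fin n) : j.rev - i.rev = i - j := by
  rw [← Fin.rev_add, add_comm j i.rev, ← Fin.rev_sub, Fin.rev_rev]

theorem Fin.neg_natCast_half {n : ℕ} [NeZero n] (hn : Even n) :
    -((n / 2 : ℕ) : Fin n) = ((n / 2 : ℕ) : Fin n) := by
  refine neg_eq_of_add_eq_zero_right ?_
  rw [← Nat.cast_add, ← two_mul, Nat.mul_div_cancel' hn.two_dvd, Fin.natCast_self]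

theorem submatrix_rev_rev_involutive {R : Type*} (l m : ℕ) :
    Function.Involutive fun A : Matrix (Fin l) (Fin m) R => A.submatrix Fin.rev Fin.rev := by
  intro A
  simp only [submatrix_submatrix, Fin.rev_involutive.comp_self, submatrix_id_id]

theorem PEquiv.kronecker_toMatrix_toPEquiv {α ι κ ι' κ' : Type*} [MulZeroOneClass α]
    [DecidableEq ι'] [DecidableEq κ'] (e : ι ≃ ι') (f : κ ≃ κ') :
    (e.toPEquiv.toMatrix ⊗ₖ f.toPEquiv.toMatrix : Matrix _ _ α) =
      (e.prodCongr f).toPEquiv.toMatrix := by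
  ext ⟨i, k⟩ ⟨i', k'⟩
  simp only [kroneckerMap_apply, PEquiv.toMatrix_apply, Equiv.toPEquiv_apply, Option.mem_def,
    Option.some.injEq, ite_zero_mul_ite_zero, mul_one, Equiv.prodCongr_apply, Prod.map_apply,
    Prod.mk.injEq]

theorem exchMatrix_eq_toMatrix (n : ℕ) :
    exchMatrix n = (Fin.revPerm : Equiv.Perm (Fin n)).toPEquiv.toMatrix := by
  ext i j
  simp only [exchMatrix, of_apply, PEquiv.toMatrix_apply, Equiv.toPEquiv_apply,
    Option.mem_def, Option.some.injEq, Fin.revPerm_apply, Fin.ext_iff, Fin.val_rev]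
  congr 1
  simp only [eq_iff_iff]
  omega

theorem exchMatrix_mul_mul_exchMatrix (l m : ℕ) (A : Matrix (Fin l) (Fin m) ℝ) :
    exchMatrix l * A * exchMatrix m = A.submatrix Fin.rev Fin.rev := by
  rw [exchMatrix_eq_toMatrix, exchMatrix_eq_toMatrix, PEquiv.toMatrix_toPEquiv_mul,
    PEquiv.mul_toMatrix_toPEquiv, Fin.revPerm_symm, submatrix_submatrix]
  rfl

theorem kronecker_exchMatrix_mul_mul (n l m : ℕ) (M : Matrix (Fin n × Fin l) (Fin n × Fin m) ℝ) :
    (exchMatrix n ⊗ₖ exchMatrix l) * M * (exchMatrix n ⊗ₖ exchMatrix m) =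
      M.submatrix (Prod.map Fin.rev Fin.rev) (Prod.map Fin.rev Fin.rev) := by
  simp only [exchMatrix_eq_toMatrix, PEquiv.kronecker_toMatrix_toPEquiv,
    PEquiv.toMatrix_toPEquiv_mul, PEquiv.mul_toMatrix_toPEquiv, submatrix_submatrix]
  rfl

theorem cyclicShift_apply (n : ℕ) [NeZero n] (i j : Fin n) :
    cyclicShift n i j = if j = i + 1 then 1 else 0 := by
  simp only [cyclicShift, of_apply, Fin.ext_iff, Fin.val_add, Fin.val_one', Nat.add_mod_mod]

theorem cyclicShift_pow_apply (n : ℕ) [NeZero n] (k : ℕ) (i j : Fin n) :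
    (cyclicShift n ^ k) i j = if j = i + (k : Fin n) then 1 else 0 := by
  induction k generalizing i j with
  | zero => simp [one_apply, eq_comm]
  | succ k ih =>
    simp only [pow_succ, mul_apply, ih, cyclicShift_apply, ite_mul, one_mul, zero_mul,
      Finset.sum_ite_eq', Finset.mem_univ, if_true, Nat.cast_succ, add_assoc]

def blockCirculant {R : Type*} {n l m : ℕ} (x : Fin n → Matrix (Fin l) (Fin m) R) :
    Matrix (Fin n × Fin l) (Fin n × Fin m) R :=
  Matrix.of fun p q => x (q.1 - p.1) p.2 q.2

theorem sum_cyclicShift_pow_kronecker (n l m : ℕ) [NeZero n]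
    (x : Fin n → Matrix (Fin l) (Fin m) ℝ) :
    ∑ k : Fin n, (cyclicShift n ^ (k : ℕ)) ⊗ₖ x k = blockCirculant x := by
  ext ⟨i, a⟩ ⟨j, b⟩
  have hterm : ∀ k : Fin n, ((cyclicShift n ^ (k : ℕ)) ⊗ₖ x k) (i, a) (j, b) =
      if k = j - i then x k a b else 0 := by
    intro k
    simp only [kroneckerMap_apply, cyclicShift_pow_apply, Fin.cast_val_eq_self, ite_mul, one_mul,
      zero_mul, eq_sub_iff_add_eq', eq_comm]
  simp only [Matrix.sum_apply, hterm, Finset.sum_ite_eq', Finset.mem_univ, if_true, blockCirculant,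
    of_apply]

theorem blockCirculant_submatrix_rev {R : Type*} {n l m : ℕ} [NeZero n]
    (x : Fin n → Matrix (Fin l) (Fin m) R) :
    (blockCirculant x).submatrix (Prod.map Fin.rev Fin.rev) (Prod.map Fin.rev Fin.rev) =
      blockCirculant fun k => (x (-k)).submatrix Fin.rev Fin.rev := by
  ext ⟨i, a⟩ ⟨j, b⟩
  simp only [blockCirculant, submatrix_apply, of_apply, Prod.map_apply, Fin.rev_sub_rev, neg_sub]

theorem blockCirculant_inj {R : Type*} {n l m : ℕ} [NeZero n]
    {x y : Fin n → Matrix (Fin l) (Fin m) R} : blockCirculant x = blockCirculant y ↔ x = y := by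
  refine ⟨fun h => funext fun k => ?_, congrArg _⟩
  ext a b
  simpa [blockCirculant] using congr_fun₂ h (0, a) (k, b)

theorem blockCirculant_centrosymmetric_iff_general
    (n l m : ℕ) [NeZero n]
    (x : Fin n → Matrix (Fin l) (Fin m) ℝ)
    (X : Matrix (Fin n × Fin l) (Fin n × Fin m) ℝ)
    (hX : X = ∑ k : Fin n, (cyclicShift n ^ (k : ℕ)) ⊗ₖ x k) :
    ((exchMatrix n ⊗ₖ exchMatrix l) * X * (exchMatrix n ⊗ₖ exchMatrix m) = X ↔
      ∀ k : Fin n, x (-k) = exchMatrix l * x k * exchMatrix m) ∧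
    ((exchMatrix n ⊗ₖ exchMatrix l) * X * (exchMatrix n ⊗ₖ exchMatrix m) = X →
      x 0 = exchMatrix l * x 0 * exchMatrix m ∧
      (Even n → x ((n / 2 : ℕ) : Fin n) =
        exchMatrix l * x ((n / 2 : ℕ) : Fin n) * exchMatrix m)) := by
  have hcentro : (exchMatrix n ⊗ₖ exchMatrix l) * X * (exchMatrix n ⊗ₖ exchMatrix m) = X ↔
      ∀ k : Fin n, x (-k) = exchMatrix l * x k * exchMatrix m := by
    rw [hX, sum_cyclicShift_pow_kronecker, kronecker_exchMatrix_mul_mul,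
      blockCirculant_submatrix_rev, blockCirculant_inj, funext_iff]
    simp only [exchMatrix_mul_mul_exchMatrix, (submatrix_rev_rev_involutive l m).eq_iff]
  refine ⟨hcentro, fun hsymm => ?_⟩
  have hblocks := hcentro.mp hsymm
  refine ⟨by simpa using hblocks 0, fun hn => ?_⟩
  simpa [Fin.neg_natCast_half hn] using hblocks ((n / 2 : ℕ) : Fin n)

/-- **Characterization of block-circulant centrosymmetric matrices.** A block-circulant
matrix `X = Σ_k Ω_n^k ⊗ x_k` is centrosymmetric (`J_{nl}·X·J_{nm} = X`, with
`J_{nl} = J_n ⊗ J_l`) iff its blocks satisfy `x_{(n−k) mod n} = J_l·x_k·J_m` for all `k`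
(here `-k` denotes negation in `Fin n`, i.e. `(n−k) mod n`). In particular this requires
`x_0 = J_l·x_0·J_m` and, when `n` is even, `x_{n/2} = J_l·x_{n/2}·J_m`. -/
theorem blockCirculant_centrosymmetric_iff
    (n l m : ℕ) [NeZero n] (hl : 0 < l) (hm : 0 < m)
    (x : Fin n → Matrix (Fin l) (Fin m) ℝ)
    (X : Matrix (Fin n × Fin l) (Fin n × Fin m) ℝ)
    (hX : X = ∑ k : Fin n, (cyclicShift n ^ (k : ℕ)) ⊗ₖ x k) :
    ((exchMatrix n ⊗ₖ exchMatrix l) * X * (exchMatrix n ⊗ₖ exchMatrix m) = X ↔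
      ∀ k : Fin n, x (-k) = exchMatrix l * x k * exchMatrix m) ∧
    ((exchMatrix n ⊗ₖ exchMatrix l) * X * (exchMatrix n ⊗ₖ exchMatrix m) = X →
      x 0 = exchMatrix l * x 0 * exchMatrix m ∧
      (Even n → x ((n / 2 : ℕ) : Fin n) =
        exchMatrix l * x ((n / 2 : ℕ) : Fin n) * exchMatrix m)) :=
  blockCirculant_centrosymmetric_iff_general n l m x X hX
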